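/- arXiv:math/0004160 — 2 statements merged into one kernel-verified Lean document; each statement's English description precedes it below -/
import Mathlib

section
/- Let R and S be rings and P, Q be (R, S)-bimodules. Every natural transformation c : − ⊗_R P ⟹ − ⊗_R Q between the functors Mod_R → Mod_S is given by tensoring with a single (R, S)-bimodule homomorphism c_R(1 ⊗ −) : P → Q; that is, c_M(m ⊗ p) = m ⊗ c(p) for all right R-modules M. -/
open TensorProduct

namespace NCTensor

variable (R S : Type) [Ring R] [Ring S]

/-- The balancing relations `m·r ⊗ p - m ⊗ r·p` inside `M ⊗[ℤ] P`. -/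
def balRel (M P : Type) [AddCommGroup M] [Module Rᵐᵒᵖ M] [AddCommGroup P] [Module R P] :
    Submodule ℤ (M ⊗[ℤ] P) :=
  Submodule.span ℤ
    {x | ∃ (m : M) (r : R) (p : P), x = (MulOpposite.op r • m) ⊗ₜ[ℤ] p - m ⊗ₜ[ℤ] (r • p)}

/-- The tensor product `M ⊗_R P` of a right `R`-module `M` and a left `R`-module `P` over
a (possibly noncommutative) ring `R`. -/
abbrev RTensor (M P : Type) [AddCommGroup M] [Module Rᵐᵒᵖ M] [AddCommGroup P] [Module R P] :
    Type :=
  (M ⊗[ℤ] P) ⧸ balRel R M P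

variable {M N P Q : Type} [AddCommGroup M] [Module Rᵐᵒᵖ M] [AddCommGroup N] [Module Rᵐᵒᵖ N]
  [AddCommGroup P] [Module R P] [AddCommGroup Q] [Module R Q]

/-- The class of the elementary tensor `m ⊗ p` in `M ⊗_R P`. -/
noncomputable def rmk (m : M) (p : P) : RTensor R M P :=
  Submodule.Quotient.mk (m ⊗ₜ[ℤ] p)

@[simp] lemma rmk_zero_right (m : M) : rmk R m (0 : P) = 0 := by
  simp [rmk]

@[simp] lemma rmk_add_right (m : M) (p p' : P) :
    rmk R m (p + p') = rmk R m p + rmk R m p' := by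
  simp [rmk, TensorProduct.tmul_add, ← Submodule.Quotient.mk_add]

/-- Functoriality of `− ⊗_R P` in the right-module variable. -/
noncomputable def rmap (f : M →ₗ[Rᵐᵒᵖ] N) : RTensor R M P →ₗ[ℤ] RTensor R N P :=
  Submodule.mapQ _ _ (TensorProduct.map f.toAddMonoidHom.toIntLinearMap LinearMap.id)
    (by
      unfold balRel
      rw [Submodule.span_le]
      rintro x ⟨m, r, p, rfl⟩
      simp only [SetLike.mem_coe, Submodule.mem_comap, map_sub, TensorProduct.map_tmul,
        AddMonoidHom.coe_toIntLinearMap, LinearMap.toAddMonoidHom_coe, LinearMap.id_coe,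
        id_eq, map_smul]
      exact Submodule.subset_span ⟨f m, r, p, by
          exact (LinearMap.map_sub _ _ _).trans (by simp)⟩)

@[simp] lemma rmap_rmk (f : M →ₗ[Rᵐᵒᵖ] N) (m : M) (p : P) :
    rmap R f (rmk R m p) = rmk R (f m) p := by
  simp only [rmap, rmk, Submodule.mapQ_apply, TensorProduct.map_tmul,
    AddMonoidHom.coe_toIntLinearMap, LinearMap.toAddMonoidHom_coe, LinearMap.id_coe, id_eq]
  rfl

variable [Module Sᵐᵒᵖ P] [SMulCommClass R Sᵐᵒᵖ P] [Module Sᵐᵒᵖ Q] [SMulCommClass R Sᵐᵒᵖ Q]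

/-- The right `S`-action on `M ⊗_R P` induced by the right `S`-action on `P`. -/
noncomputable def actAux (s : Sᵐᵒᵖ) : RTensor R M P →ₗ[ℤ] RTensor R M P :=
  Submodule.mapQ _ _
    (TensorProduct.map LinearMap.id (DistribMulAction.toAddMonoidHom P s).toIntLinearMap)
    (by
      unfold balRel
      rw [Submodule.span_le]
      rintro x ⟨m, r, p, rfl⟩
      simp only [SetLike.mem_coe, Submodule.mem_comap, map_sub, TensorProduct.map_tmul,
        AddMonoidHom.coe_toIntLinearMap, DistribMulAction.toAddMonoidHom_apply,
        LinearMap.id_coe, id_eq]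
      refine Submodule.subset_span ⟨m, r, s • p, ?_⟩
      refine (LinearMap.map_sub _ _ _).trans ?_
      simp only [TensorProduct.map_tmul, AddMonoidHom.coe_toIntLinearMap, DistribMulAction.toAddMonoidHom_apply,
        LinearMap.id_coe, id_eq]
      rw [smul_comm r s p])

@[simp] lemma actAux_rmk (s : Sᵐᵒᵖ) (m : M) (p : P) :
    actAux R S s (rmk R m p) = rmk R m (s • p) := by
  simp only [actAux, rmk, Submodule.mapQ_apply, TensorProduct.map_tmul,
    AddMonoidHom.coe_toIntLinearMap, DistribMulAction.toAddMonoidHom_apply,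
    LinearMap.id_coe, id_eq]
  rfl

lemma hom_ext {A : Type} [AddCommGroup A]
    {f g : RTensor R M P →ₗ[ℤ] A} (h : ∀ m p, f (rmk R m p) = g (rmk R m p)) : f = g := by
  refine LinearMap.ext fun x => ?_
  obtain ⟨y, rfl⟩ := Submodule.Quotient.mk_surjective _ x
  induction y using TensorProduct.induction_on with
  | zero => rw [Submodule.Quotient.mk_zero, map_zero, map_zero]
  | tmul m p => exact h m p
  | add a b ha hb => rw [Submodule.Quotient.mk_add, map_add, map_add, ha, hb]

/-- The right `S`-action on `M ⊗_R P` as a ring homomorphism into endomorphisms. -/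
noncomputable def actHom : Sᵐᵒᵖ →+* Module.End ℤ (RTensor R M P) where
  toFun := actAux R S
  map_one' := hom_ext R (fun m p => by simp)
  map_mul' s t := hom_ext R (fun m p => by simp [Module.End.mul_apply, mul_smul])
  map_zero' := hom_ext R (fun m p => by simp)
  map_add' s t := hom_ext R (fun m p => by simp [LinearMap.add_apply, add_smul])

/-- `M ⊗_R P` is a right `S`-module. -/
noncomputable instance : Module Sᵐᵒᵖ (RTensor R M P) :=
  Module.compHom _ (actHom R S (M := M) (P := P))

@[simp] lemma smul_rmk (s : Sᵐᵒᵖ) (m : M) (p : P) :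
    s • rmk R m p = rmk R m (s • p) :=
  actAux_rmk R S s m p

end NCTensor

open NCTensor

/-! A natural transformation is determined by its component at the free module `R`:
every elementary tensor `m ⊗ p` is the image of `1 ⊗ p` under `− ⊗ P` applied to the
right-linear map `a ↦ m·a : R → M`. Transporting `c_R(1 ⊗ p) ∈ R ⊗_R Q ≅ Q` along the same
map gives `c_M(m ⊗ p) = m ⊗ φ(p)`. Applying this to `M = R` and `m = r` shows that `φ` is
left `R`-linear, and right `S`-linearity of `c_R` gives right `S`-linearity of `φ`. -/

namespace NCTensor

section Unitor

variable (R : Type) [Ring R] {M P Q : Type} [AddCommGroup M] [Module Rᵐᵒᵖ M]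
  [AddCommGroup P] [Module R P] [AddCommGroup Q] [Module R Q]

lemma rmk_op_smul (r : R) (m : M) (p : P) :
    rmk R (MulOpposite.op r • m) p = rmk R m (r • p) := by
  rw [rmk, rmk, Submodule.Quotient.eq]
  exact Submodule.subset_span ⟨m, r, p, rfl⟩

noncomputable def lid : RTensor R R Q →ₗ[ℤ] Q :=
  (balRel R R Q).liftQ
    (TensorProduct.lift (LinearMap.mk₂ ℤ (fun (a : R) (q : Q) => a • q)
      add_smul (fun n a q => by simp only [smul_assoc]) smul_add
      (fun n a q => smul_comm a n q)))
    (by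
      rw [balRel, Submodule.span_le]
      rintro x ⟨a, r, q, rfl⟩
      change TensorProduct.lift _ _ = (0 : Q)
      rw [map_sub, lift.tmul, lift.tmul]
      simp [MulOpposite.smul_eq_mul_unop, mul_smul])

@[simp] lemma lid_rmk (a : R) (q : Q) : lid R (rmk R a q) = a • q := rfl

def toSpanSingleton (m : M) : R →ₗ[Rᵐᵒᵖ] M where
  toFun a := MulOpposite.op a • m
  map_add' a b := by simp only [MulOpposite.op_add, add_smul]
  map_smul' r a := by simp [MulOpposite.smul_eq_mul_unop, mul_smul]

@[simp] lemma toSpanSingleton_one (m : M) : toSpanSingleton R m 1 = m := by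
  simp [toSpanSingleton]

lemma rmap_eq_rmk_lid (f : R →ₗ[Rᵐᵒᵖ] M) (x : RTensor R R Q) :
    rmap R f x = rmk R (f 1) (lid R x) := by
  suffices h : rmap R f = (balRel R M Q).mkQ ∘ₗ TensorProduct.mk ℤ M Q (f 1) ∘ₗ lid R from
    LinearMap.congr_fun h x
  refine hom_ext R fun a q => ?_
  have hfa : f a = MulOpposite.op a • f 1 := by
    rw [← map_smul, MulOpposite.smul_eq_mul_unop, MulOpposite.unop_op, one_mul]
  rw [rmap_rmk, hfa, rmk_op_smul]
  rfl

variable (S : Type) [Ring S] [Module Sᵐᵒᵖ Q] [SMulCommClass R Sᵐᵒᵖ Q]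

lemma lid_smul (s : Sᵐᵒᵖ) (x : RTensor R R Q) : lid R (s • x) = s • lid R x := by
  suffices h : lid R ∘ₗ actAux R S s =
      (DistribSMul.toAddMonoidHom Q s).toIntLinearMap ∘ₗ lid R from
    LinearMap.congr_fun h x
  exact hom_ext R fun a q => smul_comm a s q

end Unitor

section Natural

variable {R : Type} [Ring R] {P Q : Type} [AddCommGroup P] [Module R P]
  [AddCommGroup Q] [Module R Q]

def IsNatural
    (c : ∀ (M : Type) [AddCommGroup M] [Module Rᵐᵒᵖ M], RTensor R M P → RTensor R M Q) : Prop :=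
  ∀ (M N : Type) [AddCommGroup M] [Module Rᵐᵒᵖ M] [AddCommGroup N] [Module Rᵐᵒᵖ N]
    (f : M →ₗ[Rᵐᵒᵖ] N) (x : RTensor R M P), c N (rmap R f x) = rmap R f (c M x)

variable {c : ∀ (M : Type) [AddCommGroup M] [Module Rᵐᵒᵖ M], RTensor R M P → RTensor R M Q}

lemma IsNatural.apply_rmk (hc : IsNatural c) {M : Type} [AddCommGroup M] [Module Rᵐᵒᵖ M]
    (m : M) (p : P) : c M (rmk R m p) = rmk R m (lid R (c R (rmk R 1 p))) := by
  have hm : rmap R (toSpanSingleton R m) (rmk R (1 : R) p) = rmk R m p := by simp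
  rw [← hm, hc, rmap_eq_rmk_lid, toSpanSingleton_one]

lemma IsNatural.lid_apply_rmk_one_smul (hc : IsNatural c) (r : R) (p : P) :
    lid R (c R (rmk R 1 (r • p))) = r • lid R (c R (rmk R 1 p)) := by
  rw [← rmk_op_smul, hc.apply_rmk, lid_rmk, MulOpposite.smul_eq_mul_unop, MulOpposite.unop_op,
    one_mul]

end Natural

end NCTensor

/-- Let `R`, `S` be rings and `P`, `Q` be `(R,S)`-bimodules.  Every natural transformation
`c : − ⊗_R P ⟹ − ⊗_R Q` between the induced functors `Mod_R ⥤ Mod_S` (a family of right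
`S`-module maps `c_M : M ⊗_R P → M ⊗_R Q`, natural in the right `R`-module `M`) is given
by tensoring with a single bimodule homomorphism `φ = c_R(1 ⊗ −) : P → Q`, i.e. `φ` is
both left `R`-linear and right `S`-linear and `c_M(m ⊗ p) = m ⊗ φ(p)` for every `M`. -/
theorem natural_transformation_of_tensor_functors_is_tensor_bimodule_hom
    (R S : Type) [Ring R] [Ring S]
    (P Q : Type) [AddCommGroup P] [Module R P] [Module Sᵐᵒᵖ P] [SMulCommClass R Sᵐᵒᵖ P]
    [AddCommGroup Q] [Module R Q] [Module Sᵐᵒᵖ Q] [SMulCommClass R Sᵐᵒᵖ Q]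
    (c : ∀ (M : Type) [AddCommGroup M] [Module Rᵐᵒᵖ M],
      RTensor R M P →ₗ[Sᵐᵒᵖ] RTensor R M Q)
    (hnat : ∀ (M N : Type) [AddCommGroup M] [Module Rᵐᵒᵖ M] [AddCommGroup N]
      [Module Rᵐᵒᵖ N] (f : M →ₗ[Rᵐᵒᵖ] N) (x : RTensor R M P),
        c N (rmap R f x) = rmap R f (c M x)) :
    ∃ φ : P →ₗ[R] Q, (∀ (s : Sᵐᵒᵖ) (p : P), φ (s • p) = s • φ p) ∧
      ∀ (M : Type) [AddCommGroup M] [Module Rᵐᵒᵖ M] (m : M) (p : P),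
        c M (rmk R m p) = rmk R m (φ p) := by
  have hc : IsNatural fun M _ _ => c M := hnat
  let φ : P →ₗ[R] Q :=
    { toFun p := lid R (c R (rmk R 1 p))
      map_add' p p' := by simp only [rmk_add_right, map_add]
      map_smul' := hc.lid_apply_rmk_one_smul }
  refine ⟨φ, fun s p => ?_, fun M _ _ => hc.apply_rmk⟩
  change lid R (c R (rmk R 1 (s • p))) = s • lid R (c R (rmk R 1 p))
  rw [← smul_rmk, map_smul, lid_smul R S]
end

section
/- Let (Mod_R, ⊙, I) be a closed monoidal structure on right R-modules. If X is a right R-module with X ⊙ R ≅ 0, then X ≅ 0. -/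
open CategoryTheory MonoidalCategory MonoidalClosed Limits

/-- Let `⊙` be a closed monoidal structure on the category of right `R`-modules
(`ModuleCat Rᵐᵒᵖ`). If `X ⊙ R ≅ 0` (where `R` is the regular right module), then `X ≅ 0`. -/
theorem isZero_of_tensor_regular_isZero {R : Type} [Ring R]
    [inst : MonoidalCategory (ModuleCat Rᵐᵒᵖ)] [MonoidalClosed (ModuleCat Rᵐᵒᵖ)]
    (X : ModuleCat Rᵐᵒᵖ) (h : IsZero (X ⊗ (ModuleCat.of Rᵐᵒᵖ R))) :
    IsZero X := by
  -- every map from the regular module to the internal hom is zero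
  have key : ∀ f : ModuleCat.of Rᵐᵒᵖ R ⟶ (ihom X).obj X, f = 0 := by
    intro f
    exact MonoidalClosed.uncurry_injective (h.eq_of_src _ _)
  -- hence the internal hom `ihom X X` is the zero module
  have hZ : IsZero ((ihom X).obj X) := by
    have hsub : Subsingleton ((ihom X).obj X) := by
      constructor
      intro a b
      have hz : ∀ m : ((ihom X).obj X), m = 0 := by
        intro m
        let g : ModuleCat.of Rᵐᵒᵖ R ⟶ (ihom X).obj X :=
          ModuleCat.ofHom
            { toFun := fun r => MulOpposite.op r • m
              map_add' := by
                intro x y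
                simp [add_smul]
              map_smul' := by
                intro s r
                simp [MulOpposite.op_smul, mul_smul, MulOpposite.smul_eq_mul_unop] }
        have hg := key g
        calc m = MulOpposite.op (1 : R) • m := (one_smul _ m).symm
          _ = g (1 : R) := rfl
          _ = (0 : ModuleCat.of Rᵐᵒᵖ R ⟶ (ihom X).obj X) (1 : R) := by rw [hg]
          _ = 0 := rfl
      rw [hz a, hz b]
    exact ModuleCat.isZero_of_subsingleton _
  -- now the identity of X is zero
  rw [IsZero.iff_id_eq_zero]
  have hρ : (ρ_ X).hom = 0 := by
    apply MonoidalClosed.curry_injective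
    exact hZ.eq_of_tgt _ _
  calc 𝟙 X = (ρ_ X).inv ≫ (ρ_ X).hom := by simp
    _ = 0 := by rw [hρ, comp_zero]
end
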